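/- arXiv:1306.3355 — 2 statements merged into one kernel-verified Lean document; each statement's English description precedes it below -/
import Mathlib

section
/- Let a_n be defined by a_1 = 1, a_2 = 2, and a_n = n·a_{n-1} + ∑_{j=2}^{n-2} (-1)^{j-1} C(n-2, j) a_{n-j} for n ≥ 3. Then a_n = ∑_{k=1}^{n-1} 2^k S(n-1, k) for all n ≥ 2, i.e., a_n = e^{-2} ∑_{k≥1} 2^k k^{n-1}/k!. -/
/-!
The right-hand side is `T_{n-1}(2)` for the Touchard polynomials `T_m(x) = ∑_k S(m,k) x^k`.
The Stirling identity `S(m+1,k+1) = ∑_j C(m,j) S(j,k)` gives `T_{m+1} = x ∑_j C(m,j) T_j`, and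
binomial inversion turns this into `∑_j (-1)^j C(m,j) T_{m+1-j} = x T_m`. Splitting off the terms
`j = 0, 1`, this is at `x = 2` the given recurrence, which determines `a_n` from `a_2`.
-/

/-- Stirling numbers of the second kind. -/
def stirling2 : ℕ → ℕ → ℕ
  | 0, 0 => 1
  | 0, _ + 1 => 0
  | _ + 1, 0 => 0
  | n + 1, k + 1 => (k + 1) * stirling2 n (k + 1) + stirling2 n k

open Finset fwdDiff

theorem stirling2_eq_stirlingSecond : stirling2 = Nat.stirlingSecond := by
  funext n k
  induction n generalizing k with
  | zero => cases k <;> rfl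
  | succ n ih =>
    cases k with
    | zero => rfl
    | succ k => rw [stirling2, Nat.stirlingSecond_succ_succ, ih, ih]

theorem Nat.stirlingSecond_succ_succ_eq_sum_choose (n k : ℕ) :
    stirlingSecond (n + 1) (k + 1) = ∑ i ∈ range (n + 1), n.choose i * stirlingSecond i k := by
  induction n generalizing k with
  | zero => simp [stirlingSecond_succ_succ]
  | succ n ih =>
    have pascal := Finset.sum_choose_succ_mul (R := ℕ) (fun i _ ↦ stirlingSecond i k) n
    simp only [Nat.cast_id] at pascal
    rw [pascal, ← ih k]
    cases k with
    | zero => simp [stirlingSecond_one_right]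
    | succ k =>
      simp only [stirlingSecond_succ_succ (k := k + 1), stirlingSecond_succ_succ _ k, mul_add,
        sum_add_distrib, mul_left_comm _ (k + 1), ← mul_sum, ← ih]
      ring

theorem fwdDiff_iter_smul_const {M R G : Type*} [AddCommMonoid M] [Ring R] [AddCommGroup G]
    [Module R G] (h : M) (f : M → R) (g : G) (n : ℕ) :
    (Δ_[h])^[n] (fun y ↦ f y • g) = fun y ↦ (Δ_[h])^[n] f y • g := by
  induction n generalizing f with
  | zero => rfl
  | succ n ih => rw [Function.iterate_succ_apply, fwdDiff_smul_const]; exact ih _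

theorem binomial_inversion {G : Type*} [AddCommGroup G] {f g : ℕ → G}
    (hfg : ∀ m, f m = ∑ j ∈ range (m + 1), m.choose j • g j) (n : ℕ) :
    ∑ k ∈ range (n + 1), ((-1 : ℤ) ^ (n - k) * n.choose k) • f k = g n := by
  set F : ℕ → G := ∑ j ∈ range (n + 1), fun x ↦ (x.choose j : ℤ) • g j
  have hF : ∀ k ∈ range (n + 1), f k = F k := by
    intro k hk
    rw [hfg]
    simp only [F, Finset.sum_apply]
    refine sum_subset (range_subset_range.2 (by simpa using hk)) (fun j _ hj ↦ ?_) |>.trans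
      (sum_congr rfl fun j _ ↦ (Nat.cast_smul_eq_nsmul ℤ _ _).symm)
    rw [Nat.choose_eq_zero_of_lt (by simpa using hj), zero_smul]
  -- `F` is the Newton series of `f` on `0, …, n`; both sides are its `n`-th difference at `0`
  calc ∑ k ∈ range (n + 1), ((-1 : ℤ) ^ (n - k) * n.choose k) • f k
      = (Δ_[1])^[n] F 0 := by
        rw [fwdDiff_iter_eq_sum_shift]
        exact sum_congr rfl fun k hk ↦ by rw [hF k hk, zero_add, smul_eq_mul, mul_one]
    _ = ∑ j ∈ range (n + 1), if n = j then g j else 0 := by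
        simp only [F, fwdDiff_iter_finsetSum, Finset.sum_apply, fwdDiff_iter_smul_const,
          fwdDiff_iter_choose_zero, ite_smul, one_smul, zero_smul]
    _ = g n := by simp

section Touchard

variable {R : Type*} [CommRing R]

def touchard (x : R) (n : ℕ) : R :=
  ∑ k ∈ range (n + 1), x ^ k * Nat.stirlingSecond n k

theorem touchard_eq_sum_range_of_le (x : R) {n N : ℕ} (hnN : n ≤ N) :
    touchard x n = ∑ k ∈ range (N + 1), x ^ k * Nat.stirlingSecond n k := by
  refine sum_subset (range_subset_range.2 (by omega)) fun k _ hk ↦ ?_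
  rw [Nat.stirlingSecond_eq_zero_of_lt (by simpa using hk), Nat.cast_zero, mul_zero]

theorem touchard_succ_eq_sum_Icc (x : R) (n : ℕ) :
    touchard x (n + 1) = ∑ k ∈ Icc 1 (n + 1), x ^ k * Nat.stirlingSecond (n + 1) k := by
  rw [touchard, sum_range_succ', ← Ico_add_one_right_eq_Icc, sum_Ico_eq_sum_range]
  simp [add_comm 1]

theorem touchard_succ (x : R) (n : ℕ) :
    touchard x (n + 1) = x * ∑ j ∈ range (n + 1), n.choose j * touchard x j := by
  calc touchard x (n + 1)
      = ∑ k ∈ range (n + 1), x ^ (k + 1) * Nat.stirlingSecond (n + 1) (k + 1) := by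
        simp [touchard, sum_range_succ' _ (n + 1)]
    _ = ∑ k ∈ range (n + 1), ∑ j ∈ range (n + 1),
          x * (n.choose j * (x ^ k * Nat.stirlingSecond j k)) := by
        refine sum_congr rfl fun k _ ↦ ?_
        simp only [Nat.stirlingSecond_succ_succ_eq_sum_choose, Nat.cast_sum, Nat.cast_mul,
          mul_sum, pow_succ]
        exact sum_congr rfl fun j _ ↦ by ring
    _ = x * ∑ j ∈ range (n + 1), n.choose j * touchard x j := by
        rw [sum_comm, mul_sum]
        refine sum_congr rfl fun j hj ↦ ?_
        rw [touchard_eq_sum_range_of_le x (Nat.lt_succ_iff.1 (mem_range.1 hj)), mul_sum, mul_sum]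

theorem sum_alternating_choose_mul_touchard (x : R) (n : ℕ) :
    ∑ j ∈ range (n + 1), (-1) ^ j * n.choose j * touchard x (n + 1 - j) = x * touchard x n := by
  have inversion := binomial_inversion (f := fun m ↦ touchard x (m + 1))
    (g := fun j ↦ x * touchard x j) (fun m ↦ by simp [touchard_succ, mul_sum, mul_left_comm]) n
  rw [← inversion, ← sum_range_reflect]
  refine sum_congr rfl fun j hj ↦ ?_
  have hjn : j ≤ n := Nat.lt_succ_iff.1 (mem_range.1 hj)
  rw [show n + 1 - 1 - j = n - j by omega, show n + 1 - (n - j) = j + 1 by omega,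
    Nat.choose_symm hjn, zsmul_eq_mul]
  push_cast
  ring

theorem touchard_add_two (x : R) (m : ℕ) :
    touchard x (m + 2) = (m + 1 + x) * touchard x (m + 1) +
      ∑ j ∈ Icc 2 (m + 1), (-1) ^ (j - 1) * (m + 1).choose j * touchard x (m + 2 - j) := by
  have key := sum_alternating_choose_mul_touchard x (m + 1)
  rw [sum_range_succ', sum_range_succ'] at key
  simp only [Nat.add_sub_add_right, Nat.sub_zero, zero_add, pow_zero, pow_one,
    Nat.choose_zero_right, Nat.choose_one_right] at key
  have tail : ∑ j ∈ Icc 2 (m + 1), (-1) ^ (j - 1) * (m + 1).choose j * touchard x (m + 2 - j) =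
      -∑ k ∈ range m, (-1) ^ (k + 1 + 1) * (m + 1).choose (k + 1 + 1) * touchard x (m - k) := by
    rw [← Ico_add_one_right_eq_Icc, sum_Ico_eq_sum_range, ← sum_neg_distrib]
    refine sum_congr (by simp) fun k _ ↦ ?_
    rw [show 2 + k - 1 = k + 1 by omega, show m + 2 - (2 + k) = m - k by omega, add_comm 2 k,
      pow_succ]
    ring
  rw [tail]
  push_cast at key
  linear_combination key

end Touchard

theorem avoid_321_recurrence_solution_general (a : ℕ → ℤ) (h2 : a 2 = 2)
    (hrec : ∀ n, 3 ≤ n →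
      a n = n * a (n - 1) + ∑ j ∈ Finset.Icc 2 (n - 2),
        (-1) ^ (j - 1) * Nat.choose (n - 2) j * a (n - j)) :
    ∀ n, 2 ≤ n →
      a n = ∑ k ∈ Finset.Icc 1 (n - 1), (2 : ℤ) ^ k * stirling2 (n - 1) k := by
  have key : ∀ m, a (m + 2) = touchard 2 (m + 1) := by
    intro m
    induction m using Nat.strong_induction_on with
    | _ m ih =>
      rcases m with _ | m
      · simp [h2, touchard, sum_range_succ, Nat.stirlingSecond_one_right]
      · have tail : ∑ j ∈ Icc 2 (m + 1), (-1) ^ (j - 1) * (m + 1).choose j * a (m + 3 - j) =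
            ∑ j ∈ Icc 2 (m + 1),
              (-1) ^ (j - 1) * (m + 1).choose j * touchard (2 : ℤ) (m + 2 - j) := by
          refine sum_congr rfl fun j hj ↦ ?_
          have hj := mem_Icc.1 hj
          rw [show m + 3 - j = m + 1 - j + 2 by omega, ih _ (by omega),
            show m + 1 - j + 1 = m + 2 - j by omega]
        have step := hrec (m + 3) (by omega)
        simp only [show m + 3 - 1 = m + 2 by omega, show m + 3 - 2 = m + 1 by omega] at step
        rw [step, ih m (by omega), tail, touchard_add_two]
        push_cast
        ring
  intro n hn
  obtain ⟨m, rfl⟩ : ∃ m, n = m + 2 := ⟨n - 2, by omega⟩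
  rw [key, show m + 2 - 1 = m + 1 by omega, stirling2_eq_stirlingSecond, touchard_succ_eq_sum_Icc]

theorem avoid_321_recurrence_solution (a : ℕ → ℤ) (h1 : a 1 = 1) (h2 : a 2 = 2)
    (hrec : ∀ n, 3 ≤ n →
      a n = n * a (n - 1) + ∑ j ∈ Finset.Icc 2 (n - 2),
        (-1) ^ (j - 1) * Nat.choose (n - 2) j * a (n - j)) :
    ∀ n, 2 ≤ n →
      a n = ∑ k ∈ Finset.Icc 1 (n - 1), (2 : ℤ) ^ k * stirling2 (n - 1) k :=
  avoid_321_recurrence_solution_general a h2 hrec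
end

section
/- For 3 ≤ i ≤ n-1, the number of permutations π of [n] such that in Flatten(π) the letter i directly precedes some member of [i-1] equals (i-2)·(n-1)!. -/
open scoped Classical

noncomputable def cycList {n : ℕ} (σ : Equiv.Perm (Fin n)) (x : Fin n) : List (Fin n) :=
  (List.range (Function.minimalPeriod σ x)).map (fun k => (⇑σ)^[k] x)

/-- The flattened form of a permutation: cycles in standard cycle form
(ordered by smallest elements, smallest first in each cycle), parentheses erased,
with values in `{1,…,n}`. -/
noncomputable def flattenPerm {n : ℕ} (σ : Equiv.Perm (Fin n)) : List ℕ :=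
  (((List.finRange n).filter (fun x => decide (∀ k < n, x ≤ (⇑σ)^[k] x))).flatMap
    (cycList σ)).map (fun x => (x : ℕ) + 1)

/-- Number of occurrences of the vincular pattern determined by `P` in `w`:
pairs of positions `i < j` (0-indexed, `i ≥ 1`) with `P w_{i-1} w_i w_j`. -/
noncomputable def vinOcc (P : ℕ → ℕ → ℕ → Prop) (w : List ℕ) : ℕ :=
  ((Finset.range w.length ×ˢ Finset.range w.length).filter
    (fun p => 0 < p.1 ∧ p.1 < p.2 ∧
      P (w.getD (p.1 - 1) 0) (w.getD p.1 0) (w.getD p.2 0))).card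

/-!
In `Flatten(π)` the letter `i` is followed by `π(i)` when `π(i)` does not start a cycle;
otherwise `i` closes the cycle whose minimum is `π(i)` and is followed by the next larger cycle
minimum. So `i` directly precedes a smaller letter iff `π(i) < i` and `π(i)` is not the largest
cycle minimum below `i`. Exactly `(i - 1)(n - 1)!` permutations have `π(i) < i`. Those in which
`π(i)` is the largest cycle minimum below `i` correspond bijectively to the `(n - 1)!`
permutations fixing `i`: cut `i` out of its cycle, which leaves all cycle minima below `i`
unchanged.
-/

namespace List

variable {α β : Type*}

theorem pair_infix_iff_getElem? {l : List α} {a b : α} :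
    [a, b] <:+: l ↔ ∃ k, l[k]? = some a ∧ l[k + 1]? = some b := by
  rw [infix_iff_getElem?]
  constructor
  · rintro ⟨k, -, h⟩
    exact ⟨k, by simpa using h 0 (by simp), by simpa [Nat.add_comm] using h 1 (by simp)⟩
  · rintro ⟨k, ha, hb⟩
    refine ⟨k, ?_, fun i hi => ?_⟩
    · have := (getElem?_eq_some_iff.1 hb).1
      simp only [length_cons, length_nil]
      omega
    · match i, hi with
      | 0, _ => simpa using ha
      | 1, _ => simpa [Nat.add_comm] using hb

theorem pair_infix_append_iff {u v : List α} {a b : α} :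
    [a, b] <:+: u ++ v ↔
      [a, b] <:+: u ∨ [a, b] <:+: v ∨ (u.getLast? = some a ∧ v.head? = some b) := by
  rw [infix_append_iff_ne_nil, ← singleton_suffix_iff_getLast?_eq_some,
    ← singleton_prefix_iff_head?_eq_some]
  refine or_congr_right (or_congr_right ⟨?_, fun h => ⟨[a], [b], by simp, by simp, rfl, h⟩⟩)
  rintro ⟨l₁, l₂, h₁, h₂, hab, hu, hv⟩
  obtain ⟨rfl, rfl⟩ : l₁ = [a] ∧ l₂ = [b] := by
    rcases l₁ with _ | ⟨c, _ | ⟨d, l₁⟩⟩ <;> rcases l₂ with _ | ⟨e, l₂⟩ <;> simp_all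
  exact ⟨hu, hv⟩

theorem pair_infix_flatMap_iff {S : List α} {f : α → List β} (hf : ∀ s ∈ S, f s ≠ [])
    {a b : β} :
    [a, b] <:+: S.flatMap f ↔
      (∃ s ∈ S, [a, b] <:+: f s) ∨
        ∃ s t, [s, t] <:+: S ∧ (f s).getLast? = some a ∧ (f t).head? = some b := by
  induction S with
  | nil => simp [infix_nil]
  | cons c S ih =>
    have hS : ∀ s ∈ S, f s ≠ [] := fun s hs => hf s (mem_cons_of_mem c hs)
    have hhead :
        (S.flatMap f).head? = some b ↔ ∃ t, S.head? = some t ∧ (f t).head? = some b := by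
      rcases S with _ | ⟨t, S⟩
      · simp
      · simp [head?_append_of_ne_nil _ (hS t mem_cons_self)]
    rw [flatMap_cons, pair_infix_append_iff, ih hS, hhead]
    simp only [mem_cons, exists_eq_or_imp, infix_cons_iff, cons_prefix_cons,
      singleton_prefix_iff_head?_eq_some]
    constructor
    · rintro (h | (⟨s, hs, h⟩ | ⟨s, t, hst, hs, ht⟩) | ⟨hc, t, hS, ht⟩)
      · exact .inl (.inl h)
      · exact .inl (.inr ⟨s, hs, h⟩)
      · exact .inr ⟨s, t, .inr hst, hs, ht⟩
      · exact .inr ⟨c, t, .inl ⟨rfl, hS⟩, hc, ht⟩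
    · rintro ((h | ⟨s, hs, h⟩) | ⟨s, t, (⟨rfl, hS⟩ | hst), hs, ht⟩)
      · exact .inl h
      · exact .inr (.inl (.inl ⟨s, hs, h⟩))
      · exact .inr (.inr ⟨hs, t, hS, ht⟩)
      · exact .inr (.inl (.inr ⟨s, t, hst, hs, ht⟩))

theorem exists_getD_eq_and_getD_succ_lt_iff {l : List ℕ} {i : ℕ} :
    (∃ a < l.length - 1, l.getD a 0 = i ∧ l.getD (a + 1) 0 < i) ↔ ∃ j < i, [i, j] <:+: l := by
  simp only [pair_infix_iff_getElem?, getD_eq_getElem?_getD]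
  constructor
  · rintro ⟨a, ha, hi, hj⟩
    rw [getElem?_eq_getElem (by omega)] at hi hj
    exact ⟨_, hj, a, by simp [← hi], getElem?_eq_getElem _⟩
  · rintro ⟨j, hj, a, hi, hj'⟩
    have := (getElem?_eq_some_iff.1 hj').1
    exact ⟨a, by omega, by simp [hi], by simpa [hj'] using hj⟩

theorem Pairwise.exists_lt_pair_infix_iff [LinearOrder α] {l : List α}
    (hl : l.Pairwise (· < ·)) {a b : α} :
    (∃ y < b, [a, y] <:+: l) ↔ a ∈ l ∧ ∃ z ∈ l, a < z ∧ z < b := by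
  constructor
  · rintro ⟨y, hyb, hay⟩
    have hlt : a < y := by simpa using hl.sublist hay.sublist
    exact ⟨hay.subset (by simp), y, hay.subset (by simp), hlt, hyb⟩
  · rintro ⟨ha, z, hz, haz, hzb⟩
    obtain ⟨s, t, rfl⟩ := append_of_mem ha
    simp only [pairwise_append, pairwise_cons, mem_cons] at hl
    obtain ⟨-, ⟨-, ht⟩, hst⟩ := hl
    have hzt : z ∈ t := by
      rcases mem_append.1 hz with hzs | hzt
      · exact absurd (hst z hzs a (.inl rfl)) haz.not_gt
      · exact (mem_cons.1 hzt).resolve_left haz.ne'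
    obtain ⟨c, t, rfl⟩ := exists_cons_of_ne_nil (ne_nil_of_mem hzt)
    have hcz : c ≤ z := by
      rcases mem_cons.1 hzt with rfl | hzt
      · exact le_rfl
      · exact ((pairwise_cons.1 ht).1 z hzt).le
    exact ⟨c, hcz.trans_lt hzb, s, t, by simp⟩

end List

open Finset Function Nat

namespace Equiv.Perm

variable {α : Type*}

theorem mem_periodicPts [Finite α] (σ : Perm α) (x : α) : x ∈ periodicPts σ := by
  rw [injective_iff_periodicPts_eq_univ.mp σ.injective]
  trivial

theorem sameCycle_iff_exists_iterate_eq [Finite α] {σ : Perm α} {x y : α} :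
    σ.SameCycle x y ↔ ∃ k, σ^[k] x = y := by
  simp only [iterate_eq_pow]
  exact ⟨SameCycle.exists_nat_pow_eq,
    fun ⟨k, hk⟩ => hk ▸ sameCycle_pow_right.2 (.refl σ x)⟩

theorem eq_of_apply_eq_of_mul_swap_inv_eq [DecidableEq α] {σ₁ σ₂ : Perm α} {a : α}
    (hσa : σ₁ a = σ₂ a) (h : σ₁ * swap a (σ₁⁻¹ a) = σ₂ * swap a (σ₂⁻¹ a)) :
    σ₁ = σ₂ := by
  have happly : ∀ σ : Perm α, (σ * swap a (σ⁻¹ a)) (σ⁻¹ a) = σ a := by simp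
  have hinv : σ₁⁻¹ a = σ₂⁻¹ a := by
    apply (σ₂ * swap a (σ₂⁻¹ a)).injective
    rw [happly, ← hσa, ← happly σ₁, h]
  calc σ₁ = σ₁ * swap a (σ₁⁻¹ a) * swap a (σ₁⁻¹ a) := (mul_swap_mul_self _ _ _).symm
    _ = σ₂ := by rw [h, hinv, mul_swap_mul_self]

section Swap

variable [DecidableEq α] [Finite α] {σ : Perm α} {a x : α}

theorem sameCycle_mul_swap_iff (hx : σ x = a) (hxa : x ≠ a) {y z : α} (hy : y ≠ a)
    (hz : z ≠ a) : (σ * swap a x).SameCycle y z ↔ σ.SameCycle y z := by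
  set τ := σ * swap a x
  have hτ : ∀ w, w ≠ a → w ≠ x → τ w = σ w := fun w hwa hwx => by
    simp [τ, swap_apply_of_ne_of_ne hwa hwx]
  have hτx : τ x = σ a := by simp [τ]
  have hσa : σ a ≠ a := fun h => hxa (σ.injective (hx.trans h.symm))
  constructor
  · have step : ∀ w, σ.SameCycle w (τ w) := fun w => by
      by_cases hwa : w = a
      · simp [τ, hwa, hx, SameCycle.refl]
      by_cases hwx : w = x
      · subst hwx
        rw [hτx, ← hx]
        exact (sameCycle_apply_right.2 (sameCycle_apply_right.2 (.refl σ w)))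
      · rw [hτ w hwa hwx]
        exact sameCycle_apply_right.2 (.refl σ w)
    rw [sameCycle_iff_exists_iterate_eq]
    rintro ⟨k, rfl⟩
    clear hz
    induction k with
    | zero => exact .refl σ y
    | succ k ih => exact ih.trans (iterate_succ_apply' τ k y ▸ step _)
  · -- `τ` is `σ` with `a` cut out of its cycle: follow the `σ`-orbit, jumping over `a`.
    let skip : α → α := fun w => if w = a then σ a else w
    have step : ∀ w, τ.SameCycle y (skip w) → τ.SameCycle y (skip (σ w)) := fun w h => by
      by_cases hwa : w = a
      · simpa [skip, hwa, hσa] using h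
      have hskip : skip (σ w) = τ w := by
        by_cases hwx : w = x
        · simp [skip, hwx, hx, hτx]
        · have hσw : σ w ≠ a := fun h => hwx (σ.injective (h.trans hx.symm))
          simp [skip, hσw, hτ w hwa hwx]
      rw [hskip]
      exact sameCycle_apply_right.2 (by simpa [skip, hwa] using h)
    rw [sameCycle_iff_exists_iterate_eq]
    rintro ⟨k, rfl⟩
    have : ∀ k, τ.SameCycle y (skip (σ^[k] y)) := fun k => by
      induction k with
      | zero => simpa [skip, hy] using SameCycle.refl τ y
      | succ k ih => exact iterate_succ_apply' σ k y ▸ step _ ih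
    simpa [skip, hz] using this k

end Swap

section CycleMin

variable [LinearOrder α]

def IsCycleMin (σ : Perm α) (x : α) : Prop := ∀ y, σ.SameCycle x y → x ≤ y

theorem IsCycleMin.eq_of_sameCycle {σ : Perm α} {x y : α} (hx : σ.IsCycleMin x)
    (hy : σ.IsCycleMin y) (h : σ.SameCycle x y) : x = y :=
  (hx y h).antisymm (hy x h.symm)

theorem exists_sameCycle_isCycleMin [Finite α] (σ : Perm α) (x : α) :
    ∃ m, σ.SameCycle x m ∧ σ.IsCycleMin m := by
  obtain ⟨m, hm, hmin⟩ := Set.exists_min_image {y | σ.SameCycle x y} id (Set.toFinite _)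
    ⟨x, .refl σ x⟩
  exact ⟨m, hm, fun y hy => hmin y (SameCycle.trans hm hy)⟩

variable [Finite α] {σ : Perm α} {a x : α}

theorem isCycleMin_mul_swap_iff (hx : σ x = a) (hxa : x ≠ a) {y : α} (hy : y < a) :
    (σ * swap a x).IsCycleMin y ↔ σ.IsCycleMin y := by
  have hτa : (σ * swap a x) a = a := by simp [hx]
  refine ⟨fun h z hz => ?_, fun h z hz => ?_⟩
  · rcases eq_or_ne z a with rfl | hza
    · exact hy.le
    · exact h z ((sameCycle_mul_swap_iff hx hxa hy.ne hza).2 hz)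
  · have hza : z ≠ a := by
      rintro rfl
      exact hy.ne (hz.eq_of_right hτa)
    exact h z ((sameCycle_mul_swap_iff hx hxa hy.ne hza).1 hz)

theorem setOf_lt_isCycleMin_mul_swap (hx : σ x = a) (hxa : x ≠ a) :
    {z | z < a ∧ (σ * swap a x).IsCycleMin z} = {z | z < a ∧ σ.IsCycleMin z} :=
  Set.ext fun _ => and_congr_right (isCycleMin_mul_swap_iff hx hxa)

end CycleMin

section Count

variable [Fintype α] [DecidableEq α]

theorem card_filter_apply_eq (a b : α) :
    #{σ : Perm α | σ a = b} = (Fintype.card α - 1)! := by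
  have hfiber : ∀ c, #{σ : Perm α | σ a = c} = #{σ : Perm α | σ a = b} := fun c =>
    card_nbij' (swap c b * ·) (swap c b * ·) (fun σ hσ => by simp_all)
      (fun σ hσ => by simp_all) (fun σ _ => swap_mul_self_mul c b σ)
      (fun σ _ => swap_mul_self_mul c b σ)
  have hsum := card_eq_sum_card_fiberwise (s := univ) (t := univ)
    (f := fun σ : Perm α => σ a) (fun σ _ => mem_univ _)
  rw [sum_congr rfl fun c _ => hfiber c, sum_const, Finset.card_univ, Finset.card_univ,
    Fintype.card_perm, smul_eq_mul] at hsum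
  have hpos : 0 < Fintype.card α := Fintype.card_pos_iff.2 ⟨a⟩
  rw [← Nat.mul_factorial_pred hpos.ne'] at hsum
  exact (Nat.eq_of_mul_eq_mul_left hpos hsum).symm

theorem card_filter_apply_mem (a : α) (s : Finset α) :
    #{σ : Perm α | σ a ∈ s} = #s * (Fintype.card α - 1)! := by
  rw [card_eq_sum_card_fiberwise (s := {σ : Perm α | σ a ∈ s}) (t := s)
    (f := fun σ : Perm α => σ a) (fun σ hσ => by simpa using hσ), sum_const_nat]
  intro b hb
  rw [filter_filter, ← card_filter_apply_eq a b]
  exact congrArg card (filter_congr fun σ _ => ⟨And.right, fun h => ⟨h ▸ hb, h⟩⟩)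

end Count

section CycleMinCount

variable [Fintype α] [LinearOrder α]

-- `σ ↦ σ * swap a (σ⁻¹ a)` cuts `a` out of its cycle; the inverse puts `a` back right after
-- the preimage of the largest cycle minimum below `a`.
theorem card_filter_isGreatest_cycleMin {a b : α} (hb : b < a) :
    #{σ : Perm α | IsGreatest {z | z < a ∧ σ.IsCycleMin z} (σ a)} = (Fintype.card α - 1)! := by
  have hinv : ∀ {σ : Perm α}, σ a < a → σ (σ⁻¹ a) = a ∧ σ⁻¹ a ≠ a := fun {σ} h =>
    ⟨by simp, fun h' => h.ne (by simpa using congrArg σ h'.symm)⟩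
  rw [← card_filter_apply_eq a a]
  refine card_nbij (fun σ => σ * swap a (σ⁻¹ a)) (fun σ _ => by simp) ?_ ?_
  · intro σ₁ h₁ σ₂ h₂ heq
    replace h₁ : IsGreatest {z | z < a ∧ σ₁.IsCycleMin z} (σ₁ a) := by simpa using h₁
    replace h₂ : IsGreatest {z | z < a ∧ σ₂.IsCycleMin z} (σ₂ a) := by simpa using h₂
    replace heq : σ₁ * swap a (σ₁⁻¹ a) = σ₂ * swap a (σ₂⁻¹ a) := heq
    obtain ⟨hx₁, hxa₁⟩ := hinv h₁.1.1
    obtain ⟨hx₂, hxa₂⟩ := hinv h₂.1.1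
    rw [← setOf_lt_isCycleMin_mul_swap hx₁ hxa₁, heq,
      setOf_lt_isCycleMin_mul_swap hx₂ hxa₂] at h₁
    exact eq_of_apply_eq_of_mul_swap_inv_eq (h₁.unique h₂) heq
  · intro τ hτ
    replace hτ : τ a = a := by simpa using hτ
    obtain ⟨m, hbm, hm⟩ := exists_sameCycle_isCycleMin τ b
    obtain ⟨c, ⟨hca, hc⟩, hcmax⟩ := Set.exists_max_image {z | z < a ∧ τ.IsCycleMin z} id
      (Set.toFinite _) ⟨m, (hm b hbm.symm).trans_lt hb, hm⟩
    set x := τ⁻¹ c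
    have hxa : x ≠ a := fun h => hca.ne (by simpa [x, hτ] using congrArg τ h)
    set σ := τ * swap a x
    have hσx : σ x = a := by simp [σ, hτ]
    have hσ : σ * swap a x = τ := mul_swap_mul_self _ _ _
    refine ⟨σ, ?_, ?_⟩
    · suffices IsGreatest {z | z < a ∧ σ.IsCycleMin z} (σ a) by simpa using this
      rw [← setOf_lt_isCycleMin_mul_swap hσx hxa, hσ, show σ a = c by simp [σ, x]]
      exact ⟨⟨hca, hc⟩, hcmax⟩
    · show σ * swap a (σ⁻¹ a) = τ
      rw [inv_eq_iff_eq.2 hσx.symm, hσ]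

theorem card_filter_lt_and_not_isGreatest_cycleMin [LocallyFiniteOrderBot α] {a b : α}
    (hb : b < a) :
    #{σ : Perm α | σ a < a ∧ ¬IsGreatest {z | z < a ∧ σ.IsCycleMin z} (σ a)} =
      (#(Iio a) - 1) * (Fintype.card α - 1)! := by
  have hlt : #{σ : Perm α | σ a < a} = #(Iio a) * (Fintype.card α - 1)! := by
    simpa using card_filter_apply_mem a (Iio a)
  have hsplit := card_filter_add_card_filter_not (s := {σ : Perm α | σ a < a})
    (fun σ => IsGreatest {z | z < a ∧ σ.IsCycleMin z} (σ a))
  rw [filter_filter, filter_filter,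
    filter_congr fun σ _ => and_iff_right_of_imp fun h : IsGreatest _ (σ a) => h.1.1,
    card_filter_isGreatest_cycleMin hb, hlt] at hsplit
  rw [Nat.sub_one_mul]
  omega

end CycleMinCount

end Equiv.Perm

section Flatten

open Equiv Perm

variable {n : ℕ} (σ : Perm (Fin n))

theorem cycList_eq_iterate (x : Fin n) :
    cycList σ x = List.iterate σ x (minimalPeriod σ x) :=
  List.range_map_iterate _ _ _

theorem nodup_cycList (x : Fin n) : (cycList σ x).Nodup :=
  Cycle.nodup_coe_iff.1 nodup_periodicOrbit

theorem mem_cycList {x y : Fin n} : y ∈ cycList σ x ↔ σ.SameCycle x y := by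
  rw [← Cycle.mem_coe_iff, cycList, ← periodicOrbit_def,
    mem_periodicOrbit_iff (mem_periodicPts σ x), sameCycle_iff_exists_iterate_eq]

theorem getElem?_cycList_eq_some {x y : Fin n} {k : ℕ} :
    (cycList σ x)[k]? = some y ↔ k < minimalPeriod σ x ∧ σ^[k] x = y := by
  rw [cycList_eq_iterate]
  constructor
  · intro h
    have hk : k < minimalPeriod σ x := by simpa using (List.getElem?_eq_some_iff.1 h).1
    exact ⟨hk, Option.some_inj.1 ((List.getElem?_iterate _ _ _ _ hk).symm.trans h)⟩
  · rintro ⟨hk, rfl⟩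
    exact List.getElem?_iterate _ _ _ _ hk

theorem head?_cycList (x : Fin n) : (cycList σ x).head? = some x := by
  rw [List.head?_eq_getElem?, getElem?_cycList_eq_some]
  exact ⟨minimalPeriod_pos_of_mem_periodicPts (mem_periodicPts σ x), rfl⟩

theorem getLast?_cycList (x : Fin n) : (cycList σ x).getLast? = some (σ⁻¹ x) := by
  have hpos := minimalPeriod_pos_of_mem_periodicPts (mem_periodicPts σ x)
  rw [List.getLast?_eq_getElem?, getElem?_cycList_eq_some, cycList_eq_iterate,
    List.length_iterate, eq_inv_iff_eq, ← iterate_succ_apply' σ, Nat.succ_eq_add_one,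
    Nat.sub_one_add_one hpos.ne']
  exact ⟨Nat.sub_lt hpos one_pos, iterate_minimalPeriod⟩

theorem pair_infix_cycList_iff {x y z : Fin n} :
    [y, z] <:+: cycList σ x ↔ σ.SameCycle x y ∧ z = σ y ∧ z ≠ x := by
  simp only [List.pair_infix_iff_getElem?, getElem?_cycList_eq_some]
  constructor
  · rintro ⟨k, ⟨hk, rfl⟩, hk₁, rfl⟩
    refine ⟨sameCycle_iff_exists_iterate_eq.2 ⟨k, rfl⟩, iterate_succ_apply' σ k x, fun h => ?_⟩
    have := iterate_injOn_Iio_minimalPeriod (Set.mem_Iio.2 hk₁)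
      (Set.mem_Iio.2 (hk.trans_le' (Nat.zero_le k))) (h.trans (iterate_zero_apply σ x).symm)
    omega
  · rintro ⟨hxy, rfl, hzx⟩
    obtain ⟨k, hk, rfl⟩ : ∃ k < minimalPeriod σ x, σ^[k] x = y := by
      obtain ⟨k, h⟩ := List.mem_iff_getElem?.1 ((mem_cycList σ).2 hxy)
      exact ⟨k, (getElem?_cycList_eq_some σ).1 h⟩
    refine ⟨k, ⟨hk, rfl⟩, ?_, iterate_succ_apply' σ k x⟩
    by_contra hk₁
    have hp : k + 1 = minimalPeriod σ x := by omega
    exact hzx (by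
      rw [← iterate_succ_apply' σ k x, Nat.succ_eq_add_one, hp, iterate_minimalPeriod])

noncomputable def cycleMins : List (Fin n) :=
  (List.finRange n).filter (fun x => decide (∀ k < n, x ≤ (⇑σ)^[k] x))

noncomputable def flattenFin : List (Fin n) := (cycleMins σ).flatMap (cycList σ)

theorem flattenPerm_eq_map_flattenFin :
    flattenPerm σ = (flattenFin σ).map (fun x : Fin n => (x : ℕ) + 1) := by
  simp only [flattenPerm, flattenFin, cycleMins, List.pure_def, List.bind_eq_flatMap]
  rw [← List.map_eq_flatMap, List.map_map]
  rfl

theorem mem_cycleMins {x : Fin n} : x ∈ cycleMins σ ↔ σ.IsCycleMin x := by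
  simp only [cycleMins, List.mem_filter, List.mem_finRange, true_and, decide_eq_true_eq]
  constructor
  · intro h y hxy
    obtain ⟨k, h'⟩ := List.mem_iff_getElem?.1 ((mem_cycList σ).2 hxy)
    obtain ⟨hk, rfl⟩ := (getElem?_cycList_eq_some σ).1 h'
    exact h k (hk.trans_le (minimalPeriod_le_card.trans_eq (Fintype.card_fin n)))
  · exact fun h k _ => h _ (sameCycle_iff_exists_iterate_eq.2 ⟨k, rfl⟩)

theorem pairwise_cycleMins : (cycleMins σ).Pairwise (· < ·) :=
  (List.pairwise_lt_finRange n).filter _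

theorem nodup_flattenFin : (flattenFin σ).Nodup := by
  refine List.nodup_flatMap.2
    ⟨fun x _ => nodup_cycList σ x, (pairwise_cycleMins σ).imp_of_mem ?_⟩
  intro s t hs ht hst y hys hyt
  rw [mem_cycList] at hys hyt
  exact hst.ne (((mem_cycleMins σ).1 hs).eq_of_sameCycle ((mem_cycleMins σ).1 ht)
    (hys.trans hyt.symm))

theorem mem_flattenFin (y : Fin n) : y ∈ flattenFin σ := by
  obtain ⟨m, hym, hm⟩ := exists_sameCycle_isCycleMin σ y
  exact List.mem_flatMap.2 ⟨m, (mem_cycleMins σ).2 hm, (mem_cycList σ).2 hym.symm⟩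

theorem length_flattenFin : (flattenFin σ).length = n := by
  rw [← List.toFinset_card_of_nodup (nodup_flattenFin σ),
    Finset.eq_univ_of_forall fun y => List.mem_toFinset.2 (mem_flattenFin σ y), Finset.card_univ,
    Fintype.card_fin]

theorem pair_infix_flattenFin_iff {x y : Fin n} :
    [x, y] <:+: flattenFin σ ↔ (y = σ x ∧ ¬σ.IsCycleMin y) ∨ [σ x, y] <:+: cycleMins σ := by
  have hne : ∀ s ∈ cycleMins σ, cycList σ s ≠ [] := fun s _ h => by
    simpa [h] using head?_cycList σ s
  rw [flattenFin, List.pair_infix_flatMap_iff hne]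
  simp only [pair_infix_cycList_iff, getLast?_cycList, head?_cycList, Option.some_inj]
  refine or_congr ⟨?_, ?_⟩ ?_
  · rintro ⟨s, hs, hsx, rfl, hys⟩
    exact ⟨rfl, fun hy => hys (((mem_cycleMins σ).1 hs).eq_of_sameCycle hy
      (sameCycle_apply_right.2 hsx)).symm⟩
  · rintro ⟨rfl, hy⟩
    obtain ⟨m, hxm, hm⟩ := exists_sameCycle_isCycleMin σ x
    exact ⟨m, (mem_cycleMins σ).2 hm, hxm.symm, rfl, fun h => hy (h ▸ hm)⟩
  · refine ⟨fun ⟨s, t, hst, hs, ht⟩ => ?_, fun h => ⟨σ x, y, h, by simp, rfl⟩⟩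
    rwa [← inv_eq_iff_eq.1 hs, ← ht]

theorem exists_lt_pair_infix_flattenFin_iff (a : Fin n) :
    (∃ y < a, [a, y] <:+: flattenFin σ) ↔
      σ a < a ∧ ¬IsGreatest {z | z < a ∧ σ.IsCycleMin z} (σ a) := by
  have hnext : (∃ y < a, [a, y] <:+: flattenFin σ) ↔
      (σ a < a ∧ ¬σ.IsCycleMin (σ a)) ∨ ∃ y < a, [σ a, y] <:+: cycleMins σ := by
    simp only [pair_infix_flattenFin_iff]
    constructor
    · rintro ⟨y, hy, ⟨rfl, h⟩ | h⟩
      exacts [.inl ⟨hy, h⟩, .inr ⟨y, hy, h⟩]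
    · rintro (⟨hy, h⟩ | ⟨y, hy, h⟩)
      exacts [⟨_, hy, .inl ⟨rfl, h⟩⟩, ⟨y, hy, .inr h⟩]
  rw [hnext, (pairwise_cycleMins σ).exists_lt_pair_infix_iff]
  simp only [mem_cycleMins, IsGreatest, mem_upperBounds, Set.mem_ofPred_eq]
  constructor
  · rintro (⟨hlt, hmin⟩ | ⟨hmin, z, hz, hlt, hza⟩)
    · exact ⟨hlt, fun h => hmin h.1.2⟩
    · exact ⟨hlt.trans hza, fun h => (h.2 z ⟨hza, hz⟩).not_gt hlt⟩
  · rintro ⟨hlt, hng⟩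
    by_cases hmin : σ.IsCycleMin (σ a)
    · push Not at hng
      obtain ⟨z, ⟨hza, hz⟩, hlt'⟩ := hng ⟨hlt, hmin⟩
      exact .inr ⟨hmin, z, hz, hlt', hza⟩
    · exact .inl ⟨hlt, hmin⟩

theorem exists_getD_flattenPerm_iff (a : Fin n) :
    (∃ k < n - 1,
        (flattenPerm σ).getD k 0 = a + 1 ∧ (flattenPerm σ).getD (k + 1) 0 < a + 1) ↔
      ∃ y < a, [a, y] <:+: flattenFin σ := by
  have hlen : (flattenPerm σ).length = n := by
    simp [flattenPerm_eq_map_flattenFin, length_flattenFin]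
  have h := List.exists_getD_eq_and_getD_succ_lt_iff (l := flattenPerm σ) (i := a + 1)
  rw [hlen] at h
  rw [h, flattenPerm_eq_map_flattenFin]
  simp only [List.infix_map_iff]
  constructor
  · rintro ⟨j, hj, l, hl, heq⟩
    obtain ⟨x, y, rfl⟩ : ∃ x y, l = [x, y] := by
      rcases l with _ | ⟨x, _ | ⟨y, _ | _⟩⟩ <;> simp_all
    simp only [List.map_cons, List.map_nil, List.cons.injEq, add_left_inj, and_true] at heq
    obtain rfl : a = x := Fin.ext heq.1
    exact ⟨y, Fin.lt_def.2 (by omega), hl⟩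
  · rintro ⟨y, hy, h⟩
    exact ⟨y + 1, Nat.succ_lt_succ hy, [a, y], h, rfl⟩

end Flatten

theorem card_i_directly_precedes_smaller (n i : ℕ) (hi : 3 ≤ i) (hin : i ≤ n - 1) :
    (Finset.univ.filter (fun σ : Equiv.Perm (Fin n) =>
      ∃ a < n - 1, (flattenPerm σ).getD a 0 = i ∧ (flattenPerm σ).getD (a + 1) 0 < i)).card
      = (i - 2) * Nat.factorial (n - 1) := by
  set a : Fin n := ⟨i - 1, by omega⟩
  have ha : (a : ℕ) + 1 = i := by simp only [a]; omega
  have hpred (σ : Equiv.Perm (Fin n)) :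
      (∃ k < n - 1, (flattenPerm σ).getD k 0 = i ∧ (flattenPerm σ).getD (k + 1) 0 < i) ↔
        σ a < a ∧ ¬IsGreatest {z | z < a ∧ σ.IsCycleMin z} (σ a) := by
    rw [← ha, exists_getD_flattenPerm_iff, exists_lt_pair_infix_flattenFin_iff]
  rw [filter_congr fun σ _ => hpred σ,
    Equiv.Perm.card_filter_lt_and_not_isGreatest_cycleMin (b := ⟨0, by omega⟩)
      (Fin.lt_def.2 (by simp [a]; omega)),
    Fin.card_Iio, Fintype.card_fin, show (a : ℕ) - 1 = i - 2 by omega]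
end
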